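/- First reduction formula, case r = 1, m = 1. Let p ≤ q be nonnegative integers, α_1,…,α_p complex, β_1,…,β_q complex with no β_i a nonpositive integer; let a, b, c, f be complex with c not a nonpositive integer, f not a nonpositive integer, c − a − 1 ≠ 0, c − b − 1 ≠ 0, and set η = (c−a−1)(c−b−1) f / ( ab + (c−a−b−1) f ) (assumed well defined and not a nonpositive integer). Then for |x| < 1, Σ_{i=0}^{∞} Σ_{n=0}^{∞} [ Π_{l=1}^{p} (α_l)_{i+n} / Π_{l=1}^{q} (β_l)_{i+n} ] · (a)_i (b)_i (f+1)_i (c−a−b−1)_n x^{i+n} / ( (c)_i (f)_i i! n! ) = Σ_{n=0}^{∞} [ Π_{l=1}^{p} (α_l)_n / Π_{l=1}^{q} (β_l)_n ] · (c−a−1)_n (c−b−1)_n (η+1)_n x^n / ( (c)_n (η)_n n! ). -/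

import Mathlib

/-!
Summed along the diagonals `i + n = N`, which absolute convergence allows, the coefficient of
`x ^ N` is a terminating sum in which `(f + 1)_i / (f)_i = 1 + i / f`. The two sums this produces
are contiguous to the Pfaff–Saalschütz sum
`∑_{i+n=N} (N choose i) (A)_i (B)_i (C-A-B)_n (C+i)_n = (C-A)_N (C-B)_N`,
itself three applications of the Chu–Vandermonde convolution
`(x+y)_N = ∑_{i+n=N} (N choose i) (x)_i (y)_n`, and the choice of `η` is exactly what makes their
combination factor as `(c-a-1)_N (c-b-1)_N (η+1)_N / (η)_N`.

Absolute convergence is a ratio test: every factor of the summand satisfies `g (k+1) = ρ k * g k`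
with `ρ k` tending to `1` (for `(u)_k / (v)_k`) or to `0` (for `1 / (v)_k`), and since `p ≤ q`
the `α`/`β` quotient splits into such factors.
-/

/-- Pochhammer symbol `(a)ₖ = a(a+1)⋯(a+k−1)` for complex `a`. -/
noncomputable def poch (a : ℂ) (k : ℕ) : ℂ := ∏ i ∈ Finset.range k, (a + i)

open Finset Filter Topology

@[simp] lemma poch_zero (a : ℂ) : poch a 0 = 1 := by simp [poch]

lemma poch_succ (a : ℂ) (k : ℕ) : poch a (k + 1) = poch a k * (a + k) :=
  prod_range_succ _ _

lemma poch_add (a : ℂ) (i j : ℕ) : poch a (i + j) = poch a i * poch (a + i) j := by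
  rw [poch, prod_range_add]
  exact congrArg _ (prod_congr rfl fun k _ => by push_cast; ring)

lemma poch_succ' (a : ℂ) (k : ℕ) : poch a (k + 1) = a * poch (a + 1) k := by
  rw [add_comm, poch_add]; simp [poch]

lemma poch_one (k : ℕ) : poch 1 k = k.factorial := by
  induction k with
  | zero => simp
  | succ k ih => rw [poch_succ, ih, Nat.factorial_succ]; push_cast; ring

lemma poch_ne_zero {a : ℂ} (ha : ∀ k : ℕ, a ≠ -(k : ℂ)) (k : ℕ) : poch a k ≠ 0 :=
  prod_ne_zero_iff.mpr fun i _ h => ha i (eq_neg_of_add_eq_zero_left h)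

theorem poch_add_eq_sum_antidiagonal (x y : ℂ) (n : ℕ) :
    poch (x + y) n = ∑ p ∈ antidiagonal n, (n.choose p.1 : ℂ) * (poch x p.1 * poch y p.2) := by
  induction n with
  | zero => simp
  | succ n ih =>
    rw [poch_succ, ih, sum_mul,
      sum_antidiagonal_choose_succ_mul (fun i j => poch x i * poch y j), ← sum_add_distrib]
    refine sum_congr rfl fun p hp => ?_
    rw [HasAntidiagonal.mem_antidiagonal] at hp
    have hn : (n : ℂ) = p.1 + p.2 := by exact_mod_cast hp.symm
    rw [← Nat.choose_symm_of_eq_add hp.symm, poch_succ, poch_succ, hn]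
    ring

theorem sum_antidiagonal_sum_antidiagonal_assoc {M : Type*} [AddCommMonoid M]
    (f : ℕ → ℕ → ℕ → M) (n : ℕ) :
    ∑ p ∈ antidiagonal n, ∑ q ∈ antidiagonal p.2, f p.1 q.1 q.2 =
      ∑ p ∈ antidiagonal n, ∑ q ∈ antidiagonal p.1, f q.1 q.2 p.2 := by
  simp only [sum_sigma']
  apply sum_nbij' (fun ⟨⟨i, _⟩, ⟨j, l⟩⟩ ↦ ⟨(i + j, l), (i, j)⟩)
    (fun ⟨⟨_, l⟩, ⟨i, j⟩⟩ ↦ ⟨(i, j + l), (j, l)⟩) <;> aesop (add simp add_assoc)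

lemma choose_mul_choose_eq_choose_mul_choose (i j l : ℕ) :
    (i + j + l).choose i * (j + l).choose j = (i + j + l).choose (i + j) * (i + j).choose i := by
  rw [Nat.choose_mul (Nat.le_add_right i j)]
  congr 2 <;> omega

theorem saalschutz (A B C : ℂ) (N : ℕ) :
    ∑ p ∈ antidiagonal N, (N.choose p.1 : ℂ) *
        (poch A p.1 * poch B p.1 * poch (C - A - B) p.2 * poch (C + p.1) p.2) =
      poch (C - A) N * poch (C - B) N := by
  set E := C - A - B
  -- the summand once `(C + i)_(j + l)` is expanded by Vandermonde; here `N = i + j + l`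
  let F : ℕ → ℕ → ℕ → ℂ := fun i j l => ((i + j + l).choose i * (j + l).choose j : ℕ) *
    (poch A i * poch (A + i) j * poch B i * poch E (j + l) * poch (C - A) l)
  calc _ = ∑ p ∈ antidiagonal N, ∑ q ∈ antidiagonal p.2, F p.1 q.1 q.2 := by
        refine sum_congr rfl fun p hp => ?_
        rw [show C + p.1 = (A + p.1) + (C - A) by ring, poch_add_eq_sum_antidiagonal, mul_sum,
          mul_sum]
        refine sum_congr rfl fun q hq => ?_
        rw [HasAntidiagonal.mem_antidiagonal] at hp hq
        simp only [F, ← hp, ← hq, add_assoc]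
        push_cast
        ring
    _ = ∑ p ∈ antidiagonal N, ∑ q ∈ antidiagonal p.1, F q.1 q.2 p.2 :=
        sum_antidiagonal_sum_antidiagonal_assoc F N
    _ = ∑ p ∈ antidiagonal N, (N.choose p.1 : ℂ) * (poch A p.1 * poch E p.2) * poch (C - A) N := by
        refine sum_congr rfl fun p hp => ?_
        rw [HasAntidiagonal.mem_antidiagonal] at hp
        have hinner : ∀ q ∈ antidiagonal p.1, F q.1 q.2 p.2 =
            (N.choose p.1 : ℂ) * poch A p.1 * poch E p.2 * poch (C - A) p.2 *
              ((p.1.choose q.1 : ℂ) * (poch B q.1 * poch (E + p.2) q.2)) := by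
          intro q hq
          rw [HasAntidiagonal.mem_antidiagonal] at hq
          simp only [F]
          rw [choose_mul_choose_eq_choose_mul_choose, add_comm q.2 p.2, poch_add E, ← poch_add A,
            hq, ← hp]
          push_cast
          ring
        rw [sum_congr rfl hinner, ← mul_sum, ← poch_add_eq_sum_antidiagonal,
          show B + (E + p.2) = C - A + p.2 by ring, ← hp, add_comm p.1, poch_add (C - A)]
        ring
    _ = poch (C - A) N * poch (C - B) N := by
        rw [← sum_mul, show C - B = A + E by ring, poch_add_eq_sum_antidiagonal, mul_comm]

theorem saalschutz_sub_one_mul_fst (A B C : ℂ) (N : ℕ) :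
    ∑ p ∈ antidiagonal (N + 1), ((N + 1).choose p.1 : ℂ) * p.1 *
        (poch A p.1 * poch B p.1 * poch (C - A - B - 1) p.2 * poch (C + p.1) p.2) =
      (N + 1) * A * B * (poch (C - A) N * poch (C - B) N) := by
  rw [Nat.sum_antidiagonal_succ, Nat.cast_zero, mul_zero, zero_mul, zero_add]
  have hterm : ∀ p ∈ antidiagonal N,
      ((N + 1).choose (p.1 + 1) : ℂ) * (p.1 + 1 : ℕ) * (poch A (p.1 + 1) * poch B (p.1 + 1) *
        poch (C - A - B - 1) p.2 * poch (C + (p.1 + 1 : ℕ)) p.2) =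
      (N + 1) * A * B * ((N.choose p.1 : ℂ) * (poch (A + 1) p.1 * poch (B + 1) p.1 *
        poch ((C + 1) - (A + 1) - (B + 1)) p.2 * poch ((C + 1) + p.1) p.2)) := by
    intro p _
    have hchoose : ((N + 1).choose (p.1 + 1) : ℂ) * (p.1 + 1 : ℕ) = (N + 1) * N.choose p.1 := by
      exact_mod_cast (Nat.add_one_mul_choose_eq N p.1).symm
    rw [poch_succ' A, poch_succ' B, show (C + 1) - (A + 1) - (B + 1) = C - A - B - 1 by ring,
      show C + (p.1 + 1 : ℕ) = (C + 1) + p.1 by push_cast; ring]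
    linear_combination (A * B * poch (A + 1) p.1 * poch (B + 1) p.1 * poch (C - A - B - 1) p.2 *
      poch (C + 1 + p.1) p.2) * hchoose
  rw [sum_congr rfl hterm, ← mul_sum, saalschutz]
  ring_nf

theorem saalschutz_sub_one (A B C : ℂ) (N : ℕ) :
    ∑ p ∈ antidiagonal (N + 1), ((N + 1).choose p.1 : ℂ) *
        (poch A p.1 * poch B p.1 * poch (C - A - B - 1) p.2 * poch (C + p.1) p.2) =
      poch (C - A - 1) (N + 1) * poch (C - B - 1) (N + 1) +
        (N + 1) * (C - A - B - 1) * (poch (C - A) N * poch (C - B) N) := by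
  set E := C - A - B
  have hnext := saalschutz A B C (N + 1)
  have hprev := saalschutz A B C N
  rw [Nat.sum_antidiagonal_succ'] at hnext ⊢
  have hterm : ∀ p ∈ antidiagonal N,
      ((N + 1).choose p.1 : ℂ) *
        (poch A p.1 * poch B p.1 * poch (E - 1) (p.2 + 1) * poch (C + p.1) (p.2 + 1)) =
      ((N + 1).choose p.1 : ℂ) *
        (poch A p.1 * poch B p.1 * poch E (p.2 + 1) * poch (C + p.1) (p.2 + 1)) -
      (N + 1) * (C + N) * ((N.choose p.1 : ℂ) *
        (poch A p.1 * poch B p.1 * poch E p.2 * poch (C + p.1) p.2)) := by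
    intro p hp
    rw [HasAntidiagonal.mem_antidiagonal] at hp
    have hchoose : ((N + 1).choose p.1 : ℂ) * (p.2 + 1 : ℕ) = (N + 1) * N.choose p.1 := by
      rw [Nat.choose_symm_of_eq_add (by omega : N + 1 = p.1 + (p.2 + 1)),
        Nat.choose_symm_of_eq_add hp.symm]
      exact_mod_cast (Nat.add_one_mul_choose_eq N p.2).symm
    have hN : (N : ℂ) = p.1 + p.2 := by exact_mod_cast hp.symm
    rw [poch_succ' (E - 1), sub_add_cancel, poch_succ E, poch_succ (C + p.1), hN]
    push_cast at hchoose
    rw [hN] at hchoose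
    linear_combination (-(poch A p.1 * poch B p.1 * poch E p.2 * poch (C + p.1) p.2 *
      (C + p.1 + p.2))) * hchoose
  rw [sum_congr rfl hterm, sum_sub_distrib, ← mul_sum, poch_succ' (C - A - 1),
    poch_succ' (C - B - 1), sub_add_cancel, sub_add_cancel]
  rw [poch_succ (C - A), poch_succ (C - B)] at hnext
  simp only [poch_zero, Nat.choose_self, Nat.cast_one, mul_one, one_mul] at hnext ⊢
  linear_combination hnext - (N + 1) * (C + N) * hprev

theorem saalschutz_sub_one_mul_add_fst (a b c f : ℂ) (N : ℕ) :
    ∑ p ∈ antidiagonal (N + 1), ((N + 1).choose p.1 : ℂ) * ((f + p.1) *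
        (poch a p.1 * poch b p.1 * poch (c - a - b - 1) p.2 * poch (c + p.1) p.2)) =
      poch (c - a) N * poch (c - b) N *
        ((c - a - 1) * (c - b - 1) * f + (N + 1) * (a * b + (c - a - b - 1) * f)) := by
  have hsplit : ∀ p ∈ antidiagonal (N + 1), ((N + 1).choose p.1 : ℂ) * ((f + p.1) *
      (poch a p.1 * poch b p.1 * poch (c - a - b - 1) p.2 * poch (c + p.1) p.2)) =
      f * (((N + 1).choose p.1 : ℂ) *
        (poch a p.1 * poch b p.1 * poch (c - a - b - 1) p.2 * poch (c + p.1) p.2)) +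
      ((N + 1).choose p.1 : ℂ) * p.1 *
        (poch a p.1 * poch b p.1 * poch (c - a - b - 1) p.2 * poch (c + p.1) p.2) :=
    fun _ _ => by ring
  rw [sum_congr rfl hsplit, sum_add_distrib, ← mul_sum, saalschutz_sub_one,
    saalschutz_sub_one_mul_fst, poch_succ' (c - a - 1), poch_succ' (c - b - 1), sub_add_cancel,
    sub_add_cancel]
  ring

theorem poch_div_mul_poch_div_eq_choose_mul_div {a b c f : ℂ} (e : ℂ)
    (hc : ∀ k : ℕ, c ≠ -(k : ℂ)) (hf : ∀ k : ℕ, f ≠ -(k : ℂ)) (i n : ℕ) :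
    poch a i * poch b i * poch (f + 1) i / (poch c i * poch f i * i.factorial) *
        (poch e n / n.factorial) =
      ((i + n).choose i : ℂ) * ((f + i) * (poch a i * poch b i * poch e n * poch (c + i) n)) /
        (f * poch c (i + n) * (i + n).factorial) := by
  have hfact : ∀ k : ℕ, (k.factorial : ℂ) ≠ 0 := fun k => by exact_mod_cast k.factorial_ne_zero
  have hchoose : ((i + n).choose i : ℂ) * i.factorial * n.factorial = (i + n).factorial := by
    rw [Nat.choose_symm_add]; exact_mod_cast Nat.add_choose_mul_factorial_mul_factorial _ _
  have hfpoch : f * poch (f + 1) i = poch f i * (f + i) := by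
    rw [← poch_succ', poch_succ]
  rw [div_mul_div_comm, div_eq_div_iff (by simp [poch_ne_zero, hc, hf, hfact])
    (by simpa [poch_ne_zero, hc, hfact] using hf 0), poch_add c, ← hchoose]
  linear_combination (poch a i * poch b i * poch e n * poch c i *
    poch (c + i) n * (i + n).choose i * i.factorial * n.factorial) * hfpoch

theorem sum_antidiagonal_first_reduction (a b c f η : ℂ)
    (hc : ∀ k : ℕ, c ≠ -(k : ℂ)) (hf : ∀ k : ℕ, f ≠ -(k : ℂ))
    (hden : a * b + (c - a - b - 1) * f ≠ 0)
    (hη : η = (c - a - 1) * (c - b - 1) * f / (a * b + (c - a - b - 1) * f))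
    (hη' : ∀ k : ℕ, η ≠ -(k : ℂ)) (N : ℕ) :
    ∑ p ∈ antidiagonal N, poch a p.1 * poch b p.1 * poch (f + 1) p.1 /
        (poch c p.1 * poch f p.1 * p.1.factorial) * (poch (c - a - b - 1) p.2 / p.2.factorial) =
      poch (c - a - 1) N * poch (c - b - 1) N * poch (η + 1) N /
        (poch c N * poch η N * N.factorial) := by
  have hf0 : f ≠ 0 := by simpa using hf 0
  have hη0 : η ≠ 0 := by simpa using hη' 0
  have hfact : ∀ k : ℕ, (k.factorial : ℂ) ≠ 0 := fun k => by exact_mod_cast k.factorial_ne_zero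
  have hterm : ∀ p ∈ antidiagonal N, poch a p.1 * poch b p.1 * poch (f + 1) p.1 /
      (poch c p.1 * poch f p.1 * p.1.factorial) * (poch (c - a - b - 1) p.2 / p.2.factorial) =
      (N.choose p.1 : ℂ) * ((f + p.1) *
        (poch a p.1 * poch b p.1 * poch (c - a - b - 1) p.2 * poch (c + p.1) p.2)) /
        (f * poch c N * N.factorial) := fun p hp => by
    rw [poch_div_mul_poch_div_eq_choose_mul_div _ hc hf, HasAntidiagonal.mem_antidiagonal.mp hp]
  rw [sum_congr rfl hterm, ← sum_div]
  cases N with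
  | zero => simp [hf0]
  | succ M =>
    have hQ : η * (a * b + (c - a - b - 1) * f) = (c - a - 1) * (c - b - 1) * f := by
      rw [hη]; exact div_mul_cancel₀ _ hden
    have hηpoch : η * poch (η + 1) (M + 1) = poch η (M + 1) * (η + (M + 1 : ℕ)) := by
      rw [← poch_succ', poch_succ]
    rw [saalschutz_sub_one_mul_add_fst, div_eq_div_iff (by simp [poch_ne_zero, hc, hfact, hf0])
      (by simp [poch_ne_zero, hc, hη', hfact]), poch_succ' (c - a - 1), poch_succ' (c - b - 1),
      sub_add_cancel, sub_add_cancel]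
    apply mul_left_cancel₀ hη0
    push_cast at hηpoch
    linear_combination ((M + 1) * poch (c - a) M * poch (c - b) M * poch c (M + 1) *
      (M + 1).factorial * poch η (M + 1)) * hQ
      - ((c - a - 1) * (c - b - 1) * f * poch (c - a) M * poch (c - b) M * poch c (M + 1) *
        (M + 1).factorial) * hηpoch

theorem tsum_tsum_eq_tsum_sum_antidiagonal {E : Type*} [NormedAddCommGroup E] [CompleteSpace E]
    {f : ℕ × ℕ → E} (hf : Summable f) :
    ∑' i, ∑' n, f (i, n) = ∑' N, ∑ p ∈ antidiagonal N, f p := by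
  set e := HasAntidiagonal.sigmaAntidiagonalEquivProd (A := ℕ)
  rw [← hf.tsum_prod' hf.prod_factor, ← e.tsum_eq f,
    Summable.tsum_sigma' (f := fun c => f (e c)) (fun N => (hasSum_fintype _).summable)
      (e.summable_iff.mpr hf)]
  exact tsum_congr fun N => tsum_subtype (antidiagonal N) f

def HasRatioLimit (g : ℕ → ℂ) (L : ℂ) : Prop :=
  ∃ ρ : ℕ → ℂ, Tendsto ρ atTop (𝓝 L) ∧ ∀ k, g (k + 1) = ρ k * g k

namespace HasRatioLimit

variable {g h : ℕ → ℂ} {L M : ℂ}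

theorem mul (hg : HasRatioLimit g L) (hh : HasRatioLimit h M) :
    HasRatioLimit (fun k => g k * h k) (L * M) := by
  obtain ⟨ρ, hρ, hgρ⟩ := hg
  obtain ⟨σ, hσ, hhσ⟩ := hh
  exact ⟨fun k => ρ k * σ k, hρ.mul hσ, fun k => by dsimp only; rw [hgρ, hhσ]; ring⟩

theorem prod {ι : Type*} (s : Finset ι) {g : ι → ℕ → ℂ} {L : ι → ℂ}
    (hg : ∀ i ∈ s, HasRatioLimit (g i) (L i)) :
    HasRatioLimit (fun k => ∏ i ∈ s, g i k) (∏ i ∈ s, L i) := by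
  classical
  induction s using Finset.induction_on with
  | empty => exact ⟨fun _ => 1, tendsto_const_nhds, fun k => by simp⟩
  | insert i s hi ih =>
    simp only [prod_insert hi]
    exact (hg i (mem_insert_self i s)).mul (ih fun j hj => hg j (mem_insert_of_mem hj))

theorem summable_norm_mul_pow (hg : HasRatioLimit g L) {r : ℝ} (hr : 0 ≤ r)
    (hLr : ‖L‖ * r < 1) : Summable fun k => ‖g k‖ * r ^ k := by
  obtain ⟨ρ, hρ, hgρ⟩ := hg
  have hlim : Tendsto (fun k => ‖ρ k‖ * r) atTop (𝓝 (‖L‖ * r)) := hρ.norm.mul_const r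
  refine summable_of_ratio_norm_eventually_le (r := (‖L‖ * r + 1) / 2) (by linarith) ?_
  filter_upwards [hlim.eventually (eventually_le_nhds (by linarith : ‖L‖ * r < (‖L‖ * r + 1) / 2))]
    with k hk
  rw [Real.norm_of_nonneg (by positivity), Real.norm_of_nonneg (by positivity), hgρ, norm_mul,
    pow_succ]
  calc ‖ρ k‖ * ‖g k‖ * (r ^ k * r) = ‖ρ k‖ * r * (‖g k‖ * r ^ k) := by ring
    _ ≤ (‖L‖ * r + 1) / 2 * (‖g k‖ * r ^ k) := by gcongr

end HasRatioLimit

theorem hasRatioLimit_poch_div (u v : ℂ) : HasRatioLimit (fun k => poch u k / poch v k) 1 := by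
  refine ⟨fun k => (u + k) / (v + k), ?_, fun k => ?_⟩
  · simpa using tendsto_add_mul_div_add_mul_atTop_nhds u v (1 : ℂ) one_ne_zero
  · dsimp only
    rw [poch_succ, poch_succ, mul_div_mul_comm, mul_comm]

theorem hasRatioLimit_inv_poch (v : ℂ) : HasRatioLimit (fun k => (poch v k)⁻¹) 0 := by
  refine ⟨fun k => (v + k)⁻¹, ?_, fun k => ?_⟩
  · simpa using tendsto_add_mul_div_add_mul_atTop_nhds (1 : ℂ) v 0 one_ne_zero
  · dsimp only
    rw [poch_succ, mul_inv, mul_comm]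

theorem exists_hasRatioLimit_prod_poch_div_prod_poch {p q : ℕ} (hpq : p ≤ q)
    (α : Fin p → ℂ) (β : Fin q → ℂ) :
    ∃ L : ℂ, ‖L‖ ≤ 1 ∧
      HasRatioLimit (fun k => (∏ l, poch (α l) k) / ∏ l, poch (β l) k) L := by
  obtain ⟨r, rfl⟩ := Nat.exists_eq_add_of_le hpq
  refine ⟨(∏ _ : Fin p, (1 : ℂ)) * ∏ _ : Fin r, (0 : ℂ), ?_, ?_⟩
  · simpa using pow_le_one₀ le_rfl zero_le_one
  · convert (HasRatioLimit.prod univ fun i _ =>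
        hasRatioLimit_poch_div (α i) (β (Fin.castAdd r i))).mul
      (HasRatioLimit.prod univ fun j _ => hasRatioLimit_inv_poch (β (Fin.natAdd p j)))
      using 2 with k
    rw [Fin.prod_univ_add, prod_div_distrib, prod_inv_distrib]
    ring

theorem summable_mul_mul_mul_pow_add {g U W : ℕ → ℂ} {L L₁ L₂ : ℂ}
    (hg : HasRatioLimit g L) (hL : ‖L‖ ≤ 1) (hU : HasRatioLimit U L₁) (hL₁ : ‖L₁‖ ≤ 1)
    (hW : HasRatioLimit W L₂) (hL₂ : ‖L₂‖ ≤ 1) {x : ℂ} (hx : ‖x‖ < 1) :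
    Summable fun p : ℕ × ℕ => g (p.1 + p.2) * U p.1 * W p.2 * x ^ (p.1 + p.2) := by
  obtain ⟨s, hxs, hs1⟩ := exists_between hx
  have hs0 : 0 < s := (norm_nonneg x).trans_lt hxs
  have hxs1 : ‖x‖ / s < 1 := (div_lt_one hs0).mpr hxs
  have hxs0 : 0 ≤ ‖x‖ / s := by positivity
  have hgs := hg.summable_norm_mul_pow hs0.le ((mul_le_of_le_one_left hs0.le hL).trans_lt hs1)
  have hUs := hU.summable_norm_mul_pow hxs0 ((mul_le_of_le_one_left hxs0 hL₁).trans_lt hxs1)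
  have hWs := hW.summable_norm_mul_pow hxs0 ((mul_le_of_le_one_left hxs0 hL₂).trans_lt hxs1)
  refine Summable.of_norm_bounded (((hUs.mul_of_nonneg hWs (fun _ => by positivity)
    (fun _ => by positivity))).mul_left (∑' k, ‖g k‖ * s ^ k)) fun p => ?_
  have hgp : ‖g (p.1 + p.2)‖ * s ^ (p.1 + p.2) ≤ ∑' k, ‖g k‖ * s ^ k :=
    hgs.le_tsum _ fun _ _ => by positivity
  calc ‖g (p.1 + p.2) * U p.1 * W p.2 * x ^ (p.1 + p.2)‖
      = ‖g (p.1 + p.2)‖ * s ^ (p.1 + p.2) *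
          (‖U p.1‖ * (‖x‖ / s) ^ p.1 * (‖W p.2‖ * (‖x‖ / s) ^ p.2)) := by
        simp only [norm_mul, norm_pow, div_pow, pow_add]
        field_simp
    _ ≤ _ := by gcongr

theorem kampe_de_feriet_first_reduction_r1_m1_general
    (p q : ℕ) (hpq : p ≤ q) (α : Fin p → ℂ) (β : Fin q → ℂ)
    (a b c f η : ℂ)
    (hc : ∀ k : ℕ, c ≠ -(k : ℂ)) (hf : ∀ k : ℕ, f ≠ -(k : ℂ))
    (hden : a * b + (c - a - b - 1) * f ≠ 0)
    (hη : η = (c - a - 1) * (c - b - 1) * f / (a * b + (c - a - b - 1) * f))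
    (hη' : ∀ k : ℕ, η ≠ -(k : ℂ)) :
    ∀ x : ℂ, ‖x‖ < 1 →
      (∑' i : ℕ, ∑' n : ℕ,
        (∏ l, poch (α l) (i + n)) / (∏ l, poch (β l) (i + n)) *
          (poch a i * poch b i * poch (f + 1) i) * poch (c - a - b - 1) n * x ^ (i + n) /
            (poch c i * poch f i * (Nat.factorial i : ℂ) * (Nat.factorial n : ℂ)))
      = ∑' n : ℕ, (∏ l, poch (α l) n) / (∏ l, poch (β l) n) *
          (poch (c - a - 1) n * poch (c - b - 1) n * poch (η + 1) n) * x ^ n /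
            (poch c n * poch η n * (Nat.factorial n : ℂ)) := by
  intro x hx
  obtain ⟨L, hL, hR⟩ := exists_hasRatioLimit_prod_poch_div_prod_poch hpq α β
  have hU : HasRatioLimit (fun i => poch a i * poch b i * poch (f + 1) i /
      (poch c i * poch f i * i.factorial)) 1 := by
    convert ((hasRatioLimit_poch_div a c).mul (hasRatioLimit_poch_div b f)).mul
      (hasRatioLimit_poch_div (f + 1) 1) using 1
    · funext i; rw [poch_one]; ring
    · norm_num
  have hW : HasRatioLimit (fun n => poch (c - a - b - 1) n / n.factorial) 1 := by
    simpa only [poch_one] using hasRatioLimit_poch_div (c - a - b - 1) 1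
  calc _ = ∑' i, ∑' n, (∏ l, poch (α l) (i + n)) / (∏ l, poch (β l) (i + n)) *
        (poch a i * poch b i * poch (f + 1) i / (poch c i * poch f i * i.factorial)) *
        (poch (c - a - b - 1) n / n.factorial) * x ^ (i + n) :=
        tsum_congr fun i => tsum_congr fun n => by ring
    _ = _ := tsum_tsum_eq_tsum_sum_antidiagonal
        (summable_mul_mul_mul_pow_add hR hL hU norm_one.le hW norm_one.le hx)
    _ = _ := tsum_congr fun N => by
        rw [mul_right_comm, mul_div_assoc,
          ← sum_antidiagonal_first_reduction a b c f η hc hf hden hη hη' N, mul_sum]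
        refine sum_congr rfl fun p hp => ?_
        rw [HasAntidiagonal.mem_antidiagonal.mp hp]
        ring

/-- **First reduction formula for the Kampé de Fériet function, case r = 1, m = 1.** -/
theorem kampe_de_feriet_first_reduction_r1_m1
    (p q : ℕ) (hpq : p ≤ q) (α : Fin p → ℂ) (β : Fin q → ℂ)
    (hβ : ∀ l, ∀ k : ℕ, β l ≠ -(k : ℂ))
    (a b c f η : ℂ)
    (hc : ∀ k : ℕ, c ≠ -(k : ℂ)) (hf : ∀ k : ℕ, f ≠ -(k : ℂ))
    (hca : c - a - 1 ≠ 0) (hcb : c - b - 1 ≠ 0)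
    (hden : a * b + (c - a - b - 1) * f ≠ 0)
    (hη : η = (c - a - 1) * (c - b - 1) * f / (a * b + (c - a - b - 1) * f))
    (hη' : ∀ k : ℕ, η ≠ -(k : ℂ)) :
    ∀ x : ℂ, ‖x‖ < 1 →
      (∑' i : ℕ, ∑' n : ℕ,
        (∏ l, poch (α l) (i + n)) / (∏ l, poch (β l) (i + n)) *
          (poch a i * poch b i * poch (f + 1) i) * poch (c - a - b - 1) n * x ^ (i + n) /
            (poch c i * poch f i * (Nat.factorial i : ℂ) * (Nat.factorial n : ℂ)))
      = ∑' n : ℕ, (∏ l, poch (α l) n) / (∏ l, poch (β l) n) *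
          (poch (c - a - 1) n * poch (c - b - 1) n * poch (η + 1) n) * x ^ n /
            (poch c n * poch η n * (Nat.factorial n : ℂ)) :=
  kampe_de_feriet_first_reduction_r1_m1_general p q hpq α β a b c f η hc hf hden hη hη'
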